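/- If p ≥ 2 and G is a connected, non-complete graph belonging to W_p, then every vertex of G has degree at least p. -/

import Mathlib

/-!
Suppose `deg v < p`. If some `w` is at distance two from `v`, via `v ~ u ~ w`, label `w`, `v`
and the vertices of `N(v) \ {u}` by distinct members of `Fin p` (there are at most `p` of them)
and extend these singletons to `p` disjoint maximum independent sets. The set containing `w`
avoids `v` and `N(v) \ {u}` by disjointness and `u` by independence, so it does not dominate
`v`, contradicting maximality. Otherwise, by connectivity, `v` is adjacent to every other
vertex, so `|V| = deg v + 1 ≤ p`; but `G` is not complete, so `α(G) ≥ 2`, and `p` disjoint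
maximum independent sets need `2p ≤ |V|` vertices.
-/

open Classical

noncomputable section

variable {V : Type*}

/-- `s` is an independent set of `G`. -/
def IndepSet (G : SimpleGraph V) (s : Set V) : Prop :=
  ∀ ⦃a⦄, a ∈ s → ∀ ⦃b⦄, b ∈ s → ¬ G.Adj a b

/-- The independence number `α(G)`. -/
def alphaNum [Fintype V] (G : SimpleGraph V) : ℕ :=
  sSup {n | ∃ s : Set V, IndepSet G s ∧ s.ncard = n}

/-- `s` is a maximal independent set of `G`. -/
def MaximalIndep (G : SimpleGraph V) (s : Set V) : Prop :=
  IndepSet G s ∧ ∀ t : Set V, IndepSet G t → s ⊆ t → s = t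

/-- `G` is well-covered: all maximal independent sets have cardinality `α(G)`. -/
def WellCovered [Fintype V] (G : SimpleGraph V) : Prop :=
  ∀ s : Set V, MaximalIndep G s → s.ncard = alphaNum G

/-- The open neighborhood `N_G(S)` of a set of vertices. -/
def openNbhd (G : SimpleGraph V) (S : Set V) : Set V :=
  {v | v ∉ S ∧ ∃ u ∈ S, G.Adj u v}

/-- The closed neighborhood `N_G[S]`. -/
def closedNbhd (G : SimpleGraph V) (S : Set V) : Set V :=
  S ∪ openNbhd G S

/-- The vertex set of the localization `G_S = G - N_G[S]`. -/
def localSet (G : SimpleGraph V) (S : Set V) : Set V :=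
  (closedNbhd G S)ᶜ

/-- `G` belongs to the class `W_p`. -/
def Wp (p : ℕ) [Fintype V] (G : SimpleGraph V) : Prop :=
  p ≤ Fintype.card V ∧
    ∀ A : Fin p → Set V,
      (∀ i, IndepSet G (A i)) →
      (∀ i j, i ≠ j → Disjoint (A i) (A j)) →
      ∃ S : Fin p → Set V,
        (∀ i j, i ≠ j → Disjoint (S i) (S j)) ∧
        (∀ i, IndepSet G (S i) ∧ (S i).ncard = alphaNum G) ∧
        (∀ i, A i ⊆ S i)

/-- `G` is `α`-critical: deleting any edge increases the independence number. -/
def AlphaCritical [Fintype V] (G : SimpleGraph V) : Prop :=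
  ∀ a b : V, G.Adj a b → alphaNum G < alphaNum (G.deleteEdges {s(a, b)})

/-- The vertex set of `G_{ab} = G - (N_G(a) ∪ N_G(b))`. -/
def edgeLocalSet (G : SimpleGraph V) (a b : V) : Set V :=
  (G.neighborSet a ∪ G.neighborSet b)ᶜ

section

variable {G : SimpleGraph V}

lemma bddAbove_indepSet_ncard [Finite V] (G : SimpleGraph V) :
    BddAbove {n | ∃ s : Set V, IndepSet G s ∧ s.ncard = n} :=
  ⟨Nat.card V, by rintro n ⟨s, -, rfl⟩; exact s.ncard_le_card⟩

lemma IndepSet.ncard_le_alphaNum [Fintype V] {s : Set V} (hs : IndepSet G s) :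
    s.ncard ≤ alphaNum G :=
  le_csSup (bddAbove_indepSet_ncard G) ⟨s, hs, rfl⟩

lemma IndepSet.insert {s : Set V} {v : V} (hs : IndepSet G s) (hv : ∀ u ∈ s, ¬ G.Adj v u) :
    IndepSet G (insert v s) := by
  rintro a (rfl | ha) b (rfl | hb) hab
  · exact G.irrefl hab
  · exact hv b hb hab
  · exact hv a ha hab.symm
  · exact hs ha hb hab

lemma IndepSet.exists_adj_of_ncard_eq_alphaNum [Fintype V] {s : Set V} (hs : IndepSet G s)
    (hcard : s.ncard = alphaNum G) {v : V} (hv : v ∉ s) : ∃ u ∈ s, G.Adj v u := by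
  by_contra! h
  have := (hs.insert h).ncard_le_alphaNum
  rw [Set.ncard_insert_of_notMem hv] at this
  omega

lemma two_le_alphaNum [Fintype V] {a b : V} (hab : a ≠ b) (hnadj : ¬ G.Adj a b) :
    2 ≤ alphaNum G := by
  have hind : IndepSet G {a, b} :=
    (IndepSet.insert (fun _ hx _ hy h => by simp_all) (by simpa using hnadj))
  simpa [Set.ncard_pair hab] using hind.ncard_le_alphaNum

lemma SimpleGraph.card_eq_ncard_neighborSet_add_one [Fintype V] {v : V}
    (hv : ∀ z, v ≠ z → G.Adj v z) : Fintype.card V = (G.neighborSet v).ncard + 1 := by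
  have huniv : insert v (G.neighborSet v) = Set.univ := Set.eq_univ_of_forall fun z => by
    rcases eq_or_ne v z with rfl | h
    exacts [Set.mem_insert _ _, Set.mem_insert_of_mem _ (hv z h)]
  rw [← Nat.card_eq_fintype_card, ← Set.ncard_univ, ← huniv,
    Set.ncard_insert_of_notMem (by simp)]

lemma SimpleGraph.Connected.exists_adj_adj_not_adj (hconn : G.Connected) {v z : V} (hvz : v ≠ z)
    (hnadj : ¬ G.Adj v z) : ∃ u w, G.Adj v u ∧ G.Adj u w ∧ v ≠ w ∧ ¬ G.Adj v w := by
  obtain ⟨d, -, hfst, hsnd⟩ := (hconn.preconnected v z).some.exists_boundary_dart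
    {x | v = x ∨ G.Adj v x} (Or.inl rfl) (by simp [hvz, hnadj])
  simp only [Set.mem_ofPred_eq, not_or] at hfst hsnd
  rcases hfst with hv | hvu
  · exact absurd (hv ▸ d.adj) hsnd.2
  · exact ⟨d.fst, d.snd, hvu, d.adj, hsnd⟩

namespace Wp

variable [Fintype V] {p : ℕ}

lemma exists_extend_of_injOn (hG : Wp p G) {T : Set V} {f : V → Fin p} (hf : Set.InjOn f T) :
    ∃ S : Fin p → Set V, (∀ i j, i ≠ j → Disjoint (S i) (S j)) ∧
      (∀ i, IndepSet G (S i) ∧ (S i).ncard = alphaNum G) ∧ ∀ x ∈ T, x ∈ S (f x) := by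
  obtain ⟨S, hdisj, hmax, hsub⟩ := hG.2 (fun i => {x | x ∈ T ∧ f x = i})
    (fun _ a ha b hb hab => G.ne_of_adj hab (hf ha.1 hb.1 (ha.2.trans hb.2.symm)))
    (fun _ _ hij => Set.disjoint_left.mpr fun _ ha hb => hij (ha.2.symm.trans hb.2))
  exact ⟨S, hdisj, hmax, fun x hx => hsub (f x) ⟨hx, rfl⟩⟩

lemma mul_alphaNum_le_card (hG : Wp p G) : p * alphaNum G ≤ Fintype.card V := by
  obtain ⟨S, hdisj, hmax, -⟩ := hG.2 (fun _ => ∅) (fun _ _ h => h.elim) (fun _ _ _ => by simp)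
  have hunion := Set.ncard_iUnion_of_finite (fun i => (S i).toFinite)
    (fun i j hij => hdisj i j hij)
  simp only [finsum_eq_sum_of_fintype, fun i => (hmax i).2, Finset.sum_const,
    Finset.card_univ, Fintype.card_fin, smul_eq_mul] at hunion
  rw [← hunion, ← Nat.card_eq_fintype_card]
  exact Set.ncard_le_card _

lemma two_mul_le_card (hG : Wp p G) {a b : V} (hab : a ≠ b) (hnadj : ¬ G.Adj a b) :
    2 * p ≤ Fintype.card V :=
  (Nat.mul_comm 2 p ▸ Nat.mul_le_mul_left p (two_le_alphaNum hab hnadj)).trans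
    hG.mul_alphaNum_le_card

lemma le_ncard_neighborSet (hG : Wp p G) {v u w : V} (hvu : G.Adj v u) (huw : G.Adj u w)
    (hvw : v ≠ w) (hnadj : ¬ G.Adj v w) : p ≤ (G.neighborSet v).ncard := by
  by_contra! hdeg
  have hT : (insert w (insert v (G.neighborSet v \ {u}))).ncard ≤ p := by
    have hu : u ∈ G.neighborSet v := hvu
    calc _ ≤ (insert v (G.neighborSet v \ {u})).ncard + 1 := Set.ncard_insert_le _ _
      _ ≤ (G.neighborSet v \ {u}).ncard + 1 + 1 := by gcongr; exact Set.ncard_insert_le _ _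
      _ ≤ p := by
        have := (Set.ncard_pos (G.neighborSet v).toFinite).mpr ⟨u, hu⟩
        rw [Set.ncard_sdiff_singleton_of_mem hu]
        omega
  set T := insert w (insert v (G.neighborSet v \ {u}))
  have hwT : w ∈ T := Set.mem_insert _ _
  have : Nonempty (Fin p) := ⟨⟨0, ((Set.ncard_pos T.toFinite).mpr ⟨w, hwT⟩).trans_le hT⟩⟩
  obtain ⟨f, -, hf⟩ := T.toFinite.exists_injOn_of_encard_le (t := (Set.univ : Set (Fin p)))
    (by rw [← T.toFinite.cast_ncard_eq, Set.encard_univ, ENat.card_eq_coe_fintype_card,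
      Fintype.card_fin]; exact_mod_cast hT)
  obtain ⟨S, hdisj, hmax, hmem⟩ := hG.exists_extend_of_injOn hf
  have not_mem : ∀ x ∈ T, x ≠ w → x ∉ S (f w) := fun x hx hxw =>
    Set.disjoint_left.mp (hdisj _ _ fun h => hxw (hf hx hwT h)) (hmem x hx)
  obtain ⟨x, hxS, hvx⟩ := (hmax (f w)).1.exists_adj_of_ncard_eq_alphaNum (hmax (f w)).2
    (not_mem v (by simp [T]) hvw)
  by_cases hxu : x = u
  · exact (hmax (f w)).1 hxS (hmem w hwT) (hxu ▸ huw)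
  · exact not_mem x (by simp [T, hvx, hxu]) (by rintro rfl; exact hnadj hvx) hxS

end Wp

end

theorem stmt13_general [Fintype V] (G : SimpleGraph V) (p : ℕ)
    (hconn : G.Connected) (hnc : ¬ ∀ a b : V, a ≠ b → G.Adj a b)
    (hG : Wp p G) :
    ∀ v : V, p ≤ (G.neighborSet v).ncard := by
  intro v
  by_cases hdom : ∀ z, v ≠ z → G.Adj v z
  · push Not at hnc
    obtain ⟨a, b, hab, hnadj⟩ := hnc
    have hcard := G.card_eq_ncard_neighborSet_add_one hdom
    have := hG.two_mul_le_card hab hnadj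
    omega
  · push Not at hdom
    obtain ⟨z, hvz, hnadj⟩ := hdom
    obtain ⟨u, w, hvu, huw, hvw, hvw'⟩ := hconn.exists_adj_adj_not_adj hvz hnadj
    exact hG.le_ncard_neighborSet hvu huw hvw hvw'

theorem stmt13 [Fintype V] (G : SimpleGraph V) (p : ℕ) (hp : 2 ≤ p)
    (hconn : G.Connected) (hnc : ¬ ∀ a b : V, a ≠ b → G.Adj a b)
    (hG : Wp p G) :
    ∀ v : V, p ≤ (G.neighborSet v).ncard :=
  stmt13_general G p hconn hnc hG
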